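/- If (log n + ω(1))/n ≤ p ≤ (1.1 log n)/n, then asymptotically almost surely in G ~ G(n,p) no two vertices of degree at most log n/6 are adjacent or share a common neighbor. -/

import Mathlib

/-!
Fix distinct vertices `u, v`, a vertex set `X ∋ u, v` and a set `E` of edges inside `X`. The
edges from `u` to `Xᶜ`, the edges from `v` to `Xᶜ` and `E` are pairwise disjoint, so the events
"`u` has at most `d` neighbours outside `X`", "`v` has at most `d` neighbours outside `X`" and
"`E ⊆ G`" are independent. A Chernoff bound with parameter `2` bounds each of the first two by
`exp (2d - (1 - e⁻²)(np - 3))`. Taking `X = {u, v}, E = {uv}` and `X = {u, v, w}, E = {uw, vw}`,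
a union bound over all pairs and triples bounds the probability of a bad pair by
`n (np + (np)²) exp (2d - (1 - e⁻²)(np - 3))²`. For `d = log n / 6`, `np ≥ log n` and
`e⁻² < 7/50`, the exponential factor beats both `n` and the polynomial in `np`, leaving
`O(n^(-1/30))`.
-/

open scoped Classical
open Filter

/-- Number of edges of a finite simple graph. -/
noncomputable def edgeCount {V : Type*} [Fintype V] (G : SimpleGraph V) : ℕ :=
  G.edgeFinset.card

/-- `G` contains `k` pairwise edge-disjoint spanning trees. -/
def HasDisjSpanningTrees {V : Type*} (G : SimpleGraph V) (k : ℕ) : Prop :=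
  ∃ f : Fin k → SimpleGraph V, (∀ i, f i ≤ G) ∧ (∀ i, (f i).IsTree) ∧
    ∀ i j, i ≠ j → Disjoint (f i).edgeSet (f j).edgeSet

/-- Spanning tree packing number: the maximum number of pairwise
edge-disjoint spanning trees of `G`. -/
noncomputable def stp {V : Type*} (G : SimpleGraph V) : ℕ :=
  sSup {k | HasDisjSpanningTrees G k}

/-- Number of edges of `G` between `S` and its complement. -/
noncomputable def crossCount {V : Type*} [Fintype V] (G : SimpleGraph V) (S : Finset V) : ℕ :=
  ((S ×ˢ Sᶜ).filter fun e => G.Adj e.1 e.2).card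

/-- Number of crossing edges of a partition `P` of the vertex set:
edges whose two endpoints lie in different parts of `P`. -/
noncomputable def partCross {V : Type*} [Fintype V] (G : SimpleGraph V)
    (P : Finpartition (Finset.univ : Finset V)) : ℕ :=
  (G.edgeFinset.filter fun e => ∀ t ∈ P.parts, ¬ ∀ v ∈ e, v ∈ t).card

/-- Probability that the Erdős–Rényi random graph `G(n,p)` satisfies `Q`. -/
noncomputable def grProb (n : ℕ) (p : ℝ) (Q : SimpleGraph (Fin n) → Prop) : ℝ :=
  ∑ G : SimpleGraph (Fin n),
    if Q G then p ^ edgeCount G * (1 - p) ^ (n.choose 2 - edgeCount G) else 0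


open Finset Real

section RandomSubset

variable {α : Type*}

/-- The expectation of `f S` for the random subset `S ⊆ U` that contains each element of `U`
independently with probability `p`. -/
noncomputable def bernoulliExpect (p : ℝ) (U : Finset α) (f : Finset α → ℝ) : ℝ :=
  ∑ S ∈ U.powerset, p ^ #S * (1 - p) ^ (#U - #S) * f S

variable {p : ℝ}

lemma pow_mul_one_sub_pow_nonneg (hp0 : 0 ≤ p) (hp1 : p ≤ 1) (k m : ℕ) :
    0 ≤ p ^ k * (1 - p) ^ m :=
  mul_nonneg (pow_nonneg hp0 _) (pow_nonneg (sub_nonneg.2 hp1) _)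

lemma bernoulliExpect_mono (hp0 : 0 ≤ p) (hp1 : p ≤ 1) {U : Finset α} {f g : Finset α → ℝ}
    (hfg : ∀ S ⊆ U, f S ≤ g S) : bernoulliExpect p U f ≤ bernoulliExpect p U g :=
  sum_le_sum fun S hS => mul_le_mul_of_nonneg_left (hfg S (mem_powerset.1 hS))
    (pow_mul_one_sub_pow_nonneg hp0 hp1 _ _)

lemma bernoulliExpect_nonneg (hp0 : 0 ≤ p) (hp1 : p ≤ 1) {U : Finset α} {f : Finset α → ℝ}
    (hf : ∀ S ⊆ U, 0 ≤ f S) : 0 ≤ bernoulliExpect p U f :=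
  sum_nonneg fun S hS =>
    mul_nonneg (pow_mul_one_sub_pow_nonneg hp0 hp1 _ _) (hf S (mem_powerset.1 hS))

variable [DecidableEq α]

lemma bernoulliExpect_pow_card (p x : ℝ) (U : Finset α) :
    bernoulliExpect p U (fun S => x ^ #S) = (p * x + (1 - p)) ^ #U := by
  rw [← prod_const, prod_add, bernoulliExpect]
  refine sum_congr rfl fun S hS => ?_
  rw [prod_const, prod_const, card_sdiff_of_subset (mem_powerset.1 hS), mul_pow]
  ring

lemma bernoulliExpect_one (p : ℝ) (U : Finset α) : bernoulliExpect p U (fun _ => 1) = 1 := by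
  simpa using bernoulliExpect_pow_card p 1 U

lemma bernoulliExpect_union {A B : Finset α} (hAB : Disjoint A B) (f g : Finset α → ℝ) :
    bernoulliExpect p (A ∪ B) (fun S => f (S ∩ A) * g (S ∩ B)) =
      bernoulliExpect p A f * bernoulliExpect p B g := by
  rw [bernoulliExpect, bernoulliExpect, bernoulliExpect, sum_mul_sum, ← sum_product']
  refine sum_nbij' (fun S => (S ∩ A, S ∩ B)) (fun T => T.1 ∪ T.2) ?_ ?_ ?_ ?_ ?_
  · intro S _
    simp only [mem_product, mem_powerset]
    exact ⟨inter_subset_right, inter_subset_right⟩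
  · intro T hT
    simp only [mem_product, mem_powerset] at hT ⊢
    exact union_subset_union hT.1 hT.2
  · intro S hS
    simp only [← inter_union_distrib_left, inter_eq_left.2 (mem_powerset.1 hS)]
  · intro T hT
    simp only [mem_product, mem_powerset] at hT
    simp only [union_inter_distrib_right, inter_eq_left.2 hT.1, inter_eq_left.2 hT.2,
      disjoint_iff_inter_eq_empty.1 (hAB.mono_left hT.1),
      disjoint_iff_inter_eq_empty.1 (hAB.symm.mono_left hT.2), union_empty, empty_union]
  · intro S hS
    have hS : S ⊆ A ∪ B := mem_powerset.1 hS
    have hcard : #(S ∩ A) + #(S ∩ B) = #S := by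
      rw [← card_union_of_disjoint (hAB.mono inter_subset_right inter_subset_right),
        ← inter_union_distrib_left, inter_eq_left.2 hS]
    have hA : #(S ∩ A) ≤ #A := card_le_card inter_subset_right
    have hB : #(S ∩ B) ≤ #B := card_le_card inter_subset_right
    rw [card_union_of_disjoint hAB, ← hcard,
      show #A + #B - (#(S ∩ A) + #(S ∩ B)) = (#A - #(S ∩ A)) + (#B - #(S ∩ B)) by omega]
    simp only [pow_add]
    ring

lemma bernoulliExpect_inter {A U : Finset α} (hAU : A ⊆ U) (f : Finset α → ℝ) :
    bernoulliExpect p U (fun S => f (S ∩ A)) = bernoulliExpect p A f := by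
  simpa [union_sdiff_of_subset hAU, bernoulliExpect_one] using
    bernoulliExpect_union (p := p) (disjoint_sdiff (s := A) (t := U)) f fun _ => 1

lemma bernoulliExpect_inter_mul_inter_mul_inter {A B C U : Finset α} (hAB : Disjoint A B)
    (hAC : Disjoint A C) (hBC : Disjoint B C) (hU : A ∪ B ∪ C ⊆ U) (f g h : Finset α → ℝ) :
    bernoulliExpect p U (fun S => f (S ∩ A) * g (S ∩ B) * h (S ∩ C)) =
      bernoulliExpect p A f * bernoulliExpect p B g * bernoulliExpect p C h := by
  rw [← bernoulliExpect_union hAB, ← bernoulliExpect_union (disjoint_union_left.2 ⟨hAC, hBC⟩),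
    ← bernoulliExpect_inter hU]
  simp only [inter_assoc, union_inter_cancel_left, union_inter_cancel_right]

lemma bernoulliExpect_superset (p : ℝ) (E : Finset α) :
    bernoulliExpect p E (fun S => if E ⊆ S then 1 else 0) = p ^ #E := by
  rw [bernoulliExpect, sum_eq_single E]
  · simp
  · intro S hS hSE
    rw [if_neg fun h => hSE (subset_antisymm (mem_powerset.1 hS) h), mul_zero]
  · intro h
    exact absurd (mem_powerset_self E) h

lemma bernoulliExpect_card_le (hp0 : 0 ≤ p) (hp1 : p ≤ 1) {t : ℝ} (ht : 0 ≤ t) (d : ℝ)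
    (B : Finset α) :
    bernoulliExpect p B (fun S => if (#S : ℝ) ≤ d then 1 else 0) ≤
      exp (t * d - (1 - exp (-t)) * p * #B) := by
  have hchernoff : ∀ S ⊆ B, (if (#S : ℝ) ≤ d then 1 else 0) ≤ exp (t * d) * exp (-t) ^ #S := by
    intro S _
    rw [← exp_nat_mul, ← exp_add]
    split_ifs with h
    · exact one_le_exp (by nlinarith)
    · exact (exp_pos _).le
  calc bernoulliExpect p B (fun S => if (#S : ℝ) ≤ d then 1 else 0)
      ≤ bernoulliExpect p B (fun S => exp (t * d) * exp (-t) ^ #S) :=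
        bernoulliExpect_mono hp0 hp1 hchernoff
    _ = exp (t * d) * (p * exp (-t) + (1 - p)) ^ #B := by
        rw [← bernoulliExpect_pow_card, bernoulliExpect, bernoulliExpect, mul_sum]
        exact sum_congr rfl fun S _ => by ring
    _ ≤ exp (t * d) * exp (-((1 - exp (-t)) * p)) ^ #B := by
        refine mul_le_mul_of_nonneg_left (pow_le_pow_left₀ ?_ ?_ _) (exp_pos _).le
        · nlinarith [exp_pos (-t)]
        · exact (by ring : _ = _).trans_le (add_one_le_exp (-((1 - exp (-t)) * p)))
    _ = exp (t * d - (1 - exp (-t)) * p * #B) := by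
        rw [← exp_nat_mul, ← exp_add]
        ring_nf

lemma bernoulliExpect_card_le_of_card_eq (hp0 : 0 ≤ p) (hp1 : p ≤ 1) {t : ℝ} (ht : 0 ≤ t)
    (d : ℝ) {B : Finset α} {m k : ℕ} (hB : #B = m - k) :
    bernoulliExpect p B (fun S => if (#S : ℝ) ≤ d then 1 else 0) ≤
      exp (t * d - (1 - exp (-t)) * (p * m - k)) := by
  refine (bernoulliExpect_card_le hp0 hp1 ht d B).trans (exp_le_exp.2 ?_)
  have hc : 0 ≤ 1 - exp (-t) := sub_nonneg.2 (exp_le_one_iff.2 (neg_nonpos.2 ht))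
  have hcast : (m : ℝ) - k ≤ #B := sub_le_iff_le_add.2 (by exact_mod_cast hB ▸ le_tsub_add)
  nlinarith [mul_le_mul_of_nonneg_left hcast (mul_nonneg hc hp0),
    mul_nonneg (mul_nonneg hc (sub_nonneg.2 hp1)) k.cast_nonneg]

end RandomSubset

section StarEdges

variable {V : Type*} [Fintype V] [DecidableEq V]

def starEdges (u : V) (X : Finset V) : Finset (Sym2 V) := Xᶜ.image fun x => s(u, x)

lemma card_starEdges (u : V) (X : Finset V) : #(starEdges u X) = Fintype.card V - #X := by
  rw [starEdges, card_image_of_injective _ fun _ _ h => Sym2.congr_right.1 h, card_compl]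

lemma starEdges_subset_edgeFinset_top {u : V} {X : Finset V} (hu : u ∈ X) :
    starEdges u X ⊆ (⊤ : SimpleGraph V).edgeFinset := by
  intro e he
  obtain ⟨x, hx, rfl⟩ := mem_image.1 he
  rw [SimpleGraph.mem_edgeFinset, SimpleGraph.mem_edgeSet, SimpleGraph.top_adj]
  rintro rfl
  exact mem_compl.1 hx hu

lemma disjoint_starEdges {u v : V} {X : Finset V} (hu : u ∈ X) (huv : u ≠ v) :
    Disjoint (starEdges u X) (starEdges v X) := by
  simp only [starEdges, disjoint_left, mem_image, mem_compl]
  rintro _ ⟨x, -, rfl⟩ ⟨y, hy, h⟩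
  rcases Sym2.eq_iff.1 h with ⟨h, -⟩ | ⟨-, h⟩
  · exact huv h.symm
  · exact hy (h ▸ hu)

lemma disjoint_starEdges_of_forall_mem {E : Finset (Sym2 V)} {u : V} {X : Finset V}
    (hEX : ∀ e ∈ E, ∀ x ∈ e, x ∈ X) : Disjoint E (starEdges u X) := by
  simp only [starEdges, disjoint_right, mem_image, mem_compl]
  rintro _ ⟨x, hx, rfl⟩ he
  exact hx (hEX _ he x (Sym2.mem_mk_right u x))

lemma card_edgeFinset_inter_starEdges_le_degree (G : SimpleGraph V) (u : V) (X : Finset V) :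
    #(G.edgeFinset ∩ starEdges u X) ≤ G.degree u := by
  rw [← G.card_incidenceFinset_eq_degree u]
  refine card_le_card fun e he => ?_
  obtain ⟨he, he'⟩ := mem_inter.1 he
  obtain ⟨x, -, rfl⟩ := mem_image.1 he'
  exact (G.mem_incidenceFinset u _).2 ⟨G.mem_edgeFinset.1 he, Sym2.mem_mk_left u x⟩

end StarEdges

section RandomGraph

variable {n : ℕ} {p : ℝ}

lemma grProb_nonneg (hp0 : 0 ≤ p) (hp1 : p ≤ 1) (Q : SimpleGraph (Fin n) → Prop) :
    0 ≤ grProb n p Q :=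
  sum_nonneg fun G _ => by
    split_ifs
    exacts [pow_mul_one_sub_pow_nonneg hp0 hp1 _ _, le_rfl]

lemma grProb_mono (hp0 : 0 ≤ p) (hp1 : p ≤ 1) {Q R : SimpleGraph (Fin n) → Prop}
    (h : ∀ G, Q G → R G) : grProb n p Q ≤ grProb n p R := by
  refine sum_le_sum fun G _ => ?_
  have hw := pow_mul_one_sub_pow_nonneg hp0 hp1 (edgeCount G) (n.choose 2 - edgeCount G)
  split_ifs with hQ hR hR <;> first | exact le_rfl | exact hw | exact absurd (h G hQ) hR

lemma grProb_or_le (hp0 : 0 ≤ p) (hp1 : p ≤ 1) (Q R : SimpleGraph (Fin n) → Prop) :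
    grProb n p (fun G => Q G ∨ R G) ≤ grProb n p Q + grProb n p R := by
  rw [grProb, grProb, grProb, ← sum_add_distrib]
  refine sum_le_sum fun G _ => ?_
  have hw := pow_mul_one_sub_pow_nonneg hp0 hp1 (edgeCount G) (n.choose 2 - edgeCount G)
  by_cases hQ : Q G <;> by_cases hR : R G <;> simp [hQ, hR, hw]

lemma grProb_exists_le (hp0 : 0 ≤ p) (hp1 : p ≤ 1) {β : Type*} (s : Finset β)
    (R : β → SimpleGraph (Fin n) → Prop) :
    grProb n p (fun G => ∃ b ∈ s, R b G) ≤ ∑ b ∈ s, grProb n p (R b) := by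
  simp only [grProb]
  rw [sum_comm]
  refine sum_le_sum fun G _ => ?_
  have hw := pow_mul_one_sub_pow_nonneg hp0 hp1 (edgeCount G) (n.choose 2 - edgeCount G)
  split_ifs with h
  · obtain ⟨b, hb, hR⟩ := h
    refine le_trans ?_ (single_le_sum (fun c _ => ?_) hb)
    · rw [if_pos hR]
    · split_ifs <;> simp [hw]
  · exact sum_nonneg fun c _ => by split_ifs <;> simp [hw]

lemma grProb_edgeFinset (p : ℝ) (P : Finset (Sym2 (Fin n)) → Prop) :
    grProb n p (fun G => P G.edgeFinset) =
      bernoulliExpect p (⊤ : SimpleGraph (Fin n)).edgeFinset (fun S => if P S then 1 else 0) := by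
  rw [grProb, bernoulliExpect]
  refine sum_nbij' (fun G => G.edgeFinset) (fun S => SimpleGraph.fromEdgeSet S)
    (fun G _ => mem_powerset.2 (SimpleGraph.edgeFinset_mono le_top)) (fun _ _ => mem_univ _)
    (fun G _ => by simp) (fun S hS => ?_) (fun G _ => ?_)
  · have hS : S ⊆ (⊤ : SimpleGraph (Fin n)).edgeFinset := mem_powerset.1 hS
    ext e
    simp only [SimpleGraph.mem_edgeFinset, SimpleGraph.edgeSet_fromEdgeSet, Set.mem_sdiff,
      mem_coe, and_iff_left_iff_imp]
    exact fun he => SimpleGraph.not_isDiag_of_mem_edgeSet _ (SimpleGraph.mem_edgeFinset.1 (hS he))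
  · have hcount : edgeCount G = #G.edgeFinset := by unfold edgeCount; convert rfl
    rw [hcount, SimpleGraph.card_edgeFinset_top_eq_card_choose_two, Fintype.card_fin]
    split_ifs <;> simp

lemma grProb_not (p : ℝ) (Q : SimpleGraph (Fin n) → Prop) :
    grProb n p (fun G => ¬ Q G) = 1 - grProb n p Q := by
  have h := grProb_edgeFinset (n := n) p fun _ => True
  simp only [if_true, bernoulliExpect_one] at h
  rw [eq_sub_iff_add_eq, ← h, grProb, grProb, grProb, ← sum_add_distrib]
  exact sum_congr rfl fun G _ => by split_ifs <;> simp_all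

lemma tendsto_grProb_nhds_one {p : ℕ → ℝ} {Q : ∀ n, SimpleGraph (Fin n) → Prop}
    (h : Tendsto (fun n => grProb n (p n) fun G => ¬ Q n G) atTop (nhds 0)) :
    Tendsto (fun n => grProb n (p n) (Q n)) atTop (nhds 1) := by
  simpa [grProb_not] using (tendsto_const_nhds (x := (1 : ℝ))).sub h

end RandomGraph

section SmallVertices

variable {n : ℕ} {p t : ℝ}

lemma grProb_degree_le_degree_le_subset_edgeFinset (hp0 : 0 ≤ p) (hp1 : p ≤ 1) (ht : 0 ≤ t)
    (d : ℝ) {u v : Fin n} (huv : u ≠ v) {X : Finset (Fin n)} (hu : u ∈ X) (hv : v ∈ X)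
    {E : Finset (Sym2 (Fin n))} (hE : E ⊆ (⊤ : SimpleGraph (Fin n)).edgeFinset)
    (hEX : ∀ e ∈ E, ∀ x ∈ e, x ∈ X) :
    grProb n p (fun G => (G.degree u : ℝ) ≤ d ∧ (G.degree v : ℝ) ≤ d ∧ E ⊆ G.edgeFinset) ≤
      p ^ #E * exp (t * d - (1 - exp (-t)) * (p * n - #X)) ^ 2 := by
  calc grProb n p (fun G => (G.degree u : ℝ) ≤ d ∧ (G.degree v : ℝ) ≤ d ∧ E ⊆ G.edgeFinset)
      ≤ grProb n p (fun G => E ⊆ G.edgeFinset ∧ (#(G.edgeFinset ∩ starEdges u X) : ℝ) ≤ d ∧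
          (#(G.edgeFinset ∩ starEdges v X) : ℝ) ≤ d) := by
        refine grProb_mono hp0 hp1 fun G ⟨hdu, hdv, hEG⟩ => ⟨hEG, ?_, ?_⟩
        · exact le_trans (by exact_mod_cast card_edgeFinset_inter_starEdges_le_degree G u X) hdu
        · exact le_trans (by exact_mod_cast card_edgeFinset_inter_starEdges_le_degree G v X) hdv
    _ = bernoulliExpect p (⊤ : SimpleGraph (Fin n)).edgeFinset (fun S =>
          (if E ⊆ S ∩ E then 1 else 0) * (if (#(S ∩ starEdges u X) : ℝ) ≤ d then 1 else 0) *
            (if (#(S ∩ starEdges v X) : ℝ) ≤ d then 1 else 0)) := by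
        refine (grProb_edgeFinset p (fun S => E ⊆ S ∧ (#(S ∩ starEdges u X) : ℝ) ≤ d ∧
          (#(S ∩ starEdges v X) : ℝ) ≤ d)).trans (congrArg _ (funext fun S => ?_))
        simp only [ite_zero_mul_ite_zero, mul_one, subset_inter_iff, subset_refl, and_true,
          and_assoc]
        convert rfl
    _ = p ^ #E * bernoulliExpect p (starEdges u X) (fun S => if (#S : ℝ) ≤ d then 1 else 0) *
          bernoulliExpect p (starEdges v X) (fun S => if (#S : ℝ) ≤ d then 1 else 0) := by
        rw [← bernoulliExpect_superset p E]
        exact bernoulliExpect_inter_mul_inter_mul_inter (disjoint_starEdges_of_forall_mem hEX)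
          (disjoint_starEdges_of_forall_mem hEX) (disjoint_starEdges hu huv)
          (union_subset (union_subset hE (starEdges_subset_edgeFinset_top hu))
            (starEdges_subset_edgeFinset_top hv)) (fun T => if E ⊆ T then 1 else 0)
          (fun T => if (#T : ℝ) ≤ d then 1 else 0) (fun T => if (#T : ℝ) ≤ d then 1 else 0)
    _ ≤ p ^ #E * exp (t * d - (1 - exp (-t)) * (p * n - #X)) ^ 2 := by
        have hu' := card_starEdges u X
        have hv' := card_starEdges v X
        rw [Fintype.card_fin] at hu' hv'
        rw [mul_assoc, sq]
        refine mul_le_mul_of_nonneg_left (mul_le_mul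
          (bernoulliExpect_card_le_of_card_eq hp0 hp1 ht d hu')
          (bernoulliExpect_card_le_of_card_eq hp0 hp1 ht d hv')
          (bernoulliExpect_nonneg hp0 hp1 fun S _ => ?_) (exp_pos _).le) (pow_nonneg hp0 _)
        split_ifs <;> norm_num

lemma grProb_degree_le_degree_le_adj (hp0 : 0 ≤ p) (hp1 : p ≤ 1) (ht : 0 ≤ t) (d : ℝ)
    {u v : Fin n} (huv : u ≠ v) :
    grProb n p (fun G => (G.degree u : ℝ) ≤ d ∧ (G.degree v : ℝ) ≤ d ∧ G.Adj u v) ≤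
      p * exp (t * d - (1 - exp (-t)) * (p * n - 2)) ^ 2 := by
  have h := grProb_degree_le_degree_le_subset_edgeFinset hp0 hp1 ht d huv (X := {u, v})
    (by simp) (by simp) (E := {s(u, v)}) (by simpa using huv) (by simp)
  simp only [singleton_subset_iff, SimpleGraph.mem_edgeFinset, SimpleGraph.mem_edgeSet,
    card_singleton, pow_one, card_pair huv] at h
  exact_mod_cast h

lemma grProb_degree_le_degree_le_adj_adj (hp0 : 0 ≤ p) (hp1 : p ≤ 1) (ht : 0 ≤ t) (d : ℝ)
    {u v w : Fin n} (huv : u ≠ v) (hwu : w ≠ u) (hwv : w ≠ v) :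
    grProb n p (fun G => (G.degree u : ℝ) ≤ d ∧ (G.degree v : ℝ) ≤ d ∧ G.Adj u w ∧ G.Adj v w) ≤
      p ^ 2 * exp (t * d - (1 - exp (-t)) * (p * n - 3)) ^ 2 := by
  have h := grProb_degree_le_degree_le_subset_edgeFinset hp0 hp1 ht d huv (X := {u, v, w})
    (by simp) (by simp) (E := {s(u, w), s(v, w)}) (by simp [insert_subset_iff, hwu.symm, hwv.symm])
    (by simp)
  simp only [insert_subset_iff, singleton_subset_iff, SimpleGraph.mem_edgeFinset,
    SimpleGraph.mem_edgeSet] at h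
  rw [card_pair (by simp [huv, hwu.symm]), card_insert_of_notMem (by simp [huv, hwu.symm]),
    card_pair hwv.symm] at h
  exact_mod_cast h

lemma grProb_degree_le_degree_le_adj_or_adj_adj (hp0 : 0 ≤ p) (hp1 : p ≤ 1) (ht : 0 ≤ t) (d : ℝ)
    {u v : Fin n} (huv : u ≠ v) :
    grProb n p (fun G => (G.degree u : ℝ) ≤ d ∧ (G.degree v : ℝ) ≤ d ∧
        (G.Adj u v ∨ ∃ w, G.Adj u w ∧ G.Adj v w)) ≤
      (p + n * p ^ 2) * exp (t * d - (1 - exp (-t)) * (p * n - 3)) ^ 2 := by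
  have hτ : exp (t * d - (1 - exp (-t)) * (p * n - 2)) ^ 2 ≤
      exp (t * d - (1 - exp (-t)) * (p * n - 3)) ^ 2 := by
    have hc : 0 ≤ 1 - exp (-t) := sub_nonneg.2 (exp_le_one_iff.2 (neg_nonpos.2 ht))
    gcongr
    nlinarith
  set τ := exp (t * d - (1 - exp (-t)) * (p * n - 3))
  have hcard : (#({u, v}ᶜ : Finset (Fin n)) : ℝ) ≤ n := by
    exact_mod_cast (card_le_univ _).trans_eq (Fintype.card_fin n)
  calc grProb n p (fun G => (G.degree u : ℝ) ≤ d ∧ (G.degree v : ℝ) ≤ d ∧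
        (G.Adj u v ∨ ∃ w, G.Adj u w ∧ G.Adj v w))
      ≤ grProb n p (fun G => (G.degree u : ℝ) ≤ d ∧ (G.degree v : ℝ) ≤ d ∧ G.Adj u v) +
        grProb n p (fun G => ∃ w ∈ ({u, v}ᶜ : Finset (Fin n)),
          (G.degree u : ℝ) ≤ d ∧ (G.degree v : ℝ) ≤ d ∧ G.Adj u w ∧ G.Adj v w) := by
        refine (grProb_mono hp0 hp1 fun G ⟨hdu, hdv, h⟩ => ?_).trans (grProb_or_le hp0 hp1 _ _)
        rcases h with h | ⟨w, huw, hvw⟩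
        · exact Or.inl ⟨hdu, hdv, h⟩
        · refine Or.inr ⟨w, ?_, hdu, hdv, huw, hvw⟩
          simp [huw.ne', hvw.ne']
    _ ≤ p * τ ^ 2 + ∑ _w ∈ ({u, v}ᶜ : Finset (Fin n)), p ^ 2 * τ ^ 2 := by
        refine add_le_add ((grProb_degree_le_degree_le_adj hp0 hp1 ht d huv).trans
          (mul_le_mul_of_nonneg_left hτ hp0)) ((grProb_exists_le hp0 hp1 _ _).trans
          (sum_le_sum fun w hw => ?_))
        simp only [mem_compl, mem_insert, mem_singleton, not_or] at hw
        exact grProb_degree_le_degree_le_adj_adj hp0 hp1 ht d huv hw.1 hw.2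
    _ ≤ (p + n * p ^ 2) * τ ^ 2 := by
        rw [sum_const, nsmul_eq_mul, add_mul, mul_assoc]
        gcongr

lemma grProb_exists_degree_le_degree_le_adj_or_adj_adj (hp0 : 0 ≤ p) (hp1 : p ≤ 1) (ht : 0 ≤ t)
    (d : ℝ) :
    grProb n p (fun G => ∃ u v, u ≠ v ∧ (G.degree u : ℝ) ≤ d ∧ (G.degree v : ℝ) ≤ d ∧
        (G.Adj u v ∨ ∃ w, G.Adj u w ∧ G.Adj v w)) ≤
      n ^ 2 * ((p + n * p ^ 2) * exp (t * d - (1 - exp (-t)) * (p * n - 3)) ^ 2) := by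
  calc _ ≤ grProb n p (fun G => ∃ x ∈ (univ : Finset (Fin n)).offDiag,
          (G.degree x.1 : ℝ) ≤ d ∧ (G.degree x.2 : ℝ) ≤ d ∧
            (G.Adj x.1 x.2 ∨ ∃ w, G.Adj x.1 w ∧ G.Adj x.2 w)) :=
        grProb_mono hp0 hp1 fun G ⟨u, v, huv, h⟩ => ⟨(u, v), by simpa using huv, h⟩
    _ ≤ #(univ : Finset (Fin n)).offDiag •
          ((p + n * p ^ 2) * exp (t * d - (1 - exp (-t)) * (p * n - 3)) ^ 2) :=
        (grProb_exists_le hp0 hp1 _ _).trans (sum_le_card_nsmul _ _ _ fun x hx =>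
          grProb_degree_le_degree_le_adj_or_adj_adj hp0 hp1 ht d (mem_offDiag.1 hx).2.2)
    _ ≤ _ := by
        rw [nsmul_eq_mul, offDiag_card, card_univ, Fintype.card_fin]
        refine mul_le_mul_of_nonneg_right ?_
          (mul_nonneg (add_nonneg hp0 (by positivity)) (sq_nonneg _))
        rw [sq]
        exact_mod_cast Nat.sub_le _ _

end SmallVertices

lemma exp_neg_two_lt : exp (-2) < 7 / 50 := by
  rw [exp_neg, inv_lt_comm₀ (exp_pos 2) (by norm_num), show (2 : ℝ) = 1 + 1 by norm_num,
    exp_add]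
  nlinarith [exp_one_gt_d9]

lemma exp_mul_add_sq_mul_exp_sq_le {L a : ℝ} (hL : 0 ≤ L) (hLa : L ≤ a) :
    exp L * (a + a ^ 2) * exp (2 * (L / 6) - (1 - exp (-2)) * (a - 3)) ^ 2 ≤
      10 ^ 4 * exp 6 * exp (-(L / 30)) := by
  have hc := exp_neg_two_lt
  have hc' := exp_pos (-2)
  have hpoly : a + a ^ 2 ≤ 10 ^ 4 * exp (a / 50) := by
    have h := add_one_le_exp (a / 100)
    calc a + a ^ 2 ≤ 10 ^ 4 * (a / 100 + 1) ^ 2 := by nlinarith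
      _ ≤ 10 ^ 4 * exp (a / 100) ^ 2 := by gcongr; linarith
      _ = 10 ^ 4 * exp (a / 50) := by rw [← exp_nat_mul]; ring_nf
  calc exp L * (a + a ^ 2) * exp (2 * (L / 6) - (1 - exp (-2)) * (a - 3)) ^ 2
      ≤ exp L * (10 ^ 4 * exp (a / 50)) * exp (2 * (L / 6) - (1 - exp (-2)) * (a - 3)) ^ 2 := by
        gcongr
    _ = 10 ^ 4 * exp (L + a / 50 + 2 * (2 * (L / 6) - (1 - exp (-2)) * (a - 3))) := by
        rw [← exp_nat_mul, exp_add, exp_add]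
        push_cast
        ring
    _ ≤ 10 ^ 4 * exp 6 * exp (-(L / 30)) := by
        rw [mul_assoc, ← exp_add]
        exact mul_le_mul_of_nonneg_left (exp_le_exp.2 (by nlinarith)) (by norm_num)

theorem aas_small_vertices_apart_general (p : ℕ → ℝ) (hp0 : ∀ n, 0 ≤ p n) (hp1 : ∀ n, p n ≤ 1)
    (hlow : Filter.Tendsto (fun n : ℕ => (n : ℝ) * p n - Real.log n) Filter.atTop Filter.atTop) :
    Filter.Tendsto
      (fun n : ℕ => grProb n (p n) fun G =>
        ∀ u v : Fin n, u ≠ v → (G.degree u : ℝ) ≤ Real.log n / 6 →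
          (G.degree v : ℝ) ≤ Real.log n / 6 →
          ¬ G.Adj u v ∧ ∀ w, ¬ (G.Adj u w ∧ G.Adj v w))
      Filter.atTop (nhds 1) := by
  have hmajorant : Tendsto (fun n : ℕ => 10 ^ 4 * exp 6 * exp (-(log n / 30))) atTop (nhds 0) := by
    simpa using (tendsto_exp_neg_atTop_nhds_zero.comp ((tendsto_log_atTop.comp
      tendsto_natCast_atTop_atTop).atTop_div_const (by norm_num : (0 : ℝ) < 30))).const_mul
        (10 ^ 4 * exp 6)
  refine tendsto_grProb_nhds_one (squeeze_zero'
    (.of_forall fun n => grProb_nonneg (hp0 n) (hp1 n) _) ?_ hmajorant)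
  filter_upwards [hlow.eventually_ge_atTop 0, eventually_gt_atTop 0] with n hnp hn
  refine (grProb_mono (hp0 n) (hp1 n) fun G hG => ?_).trans
    ((grProb_exists_degree_le_degree_le_adj_or_adj_adj (hp0 n) (hp1 n) zero_le_two
      (log n / 6)).trans ?_)
  · push Not at hG
    obtain ⟨u, v, huv, hu, hv, h⟩ := hG
    exact ⟨u, v, huv, hu, hv, or_iff_not_imp_left.2 h⟩
  · calc (n : ℝ) ^ 2 * ((p n + n * p n ^ 2) *
          exp (2 * (log n / 6) - (1 - exp (-2)) * (p n * n - 3)) ^ 2)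
        = exp (log n) * (p n * n + (p n * n) ^ 2) *
          exp (2 * (log n / 6) - (1 - exp (-2)) * (p n * n - 3)) ^ 2 := by
          rw [exp_log (by exact_mod_cast hn)]
          ring
      _ ≤ 10 ^ 4 * exp 6 * exp (-(log n / 30)) :=
          exp_mul_add_sq_mul_exp_sq_le (log_natCast_nonneg n) (by linarith)

theorem aas_small_vertices_apart (p : ℕ → ℝ) (hp0 : ∀ n, 0 ≤ p n) (hp1 : ∀ n, p n ≤ 1)
    (hlow : Filter.Tendsto (fun n : ℕ => (n : ℝ) * p n - Real.log n) Filter.atTop Filter.atTop)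
    (hhigh : ∀ᶠ n : ℕ in Filter.atTop, p n ≤ 1.1 * Real.log n / n) :
    Filter.Tendsto
      (fun n : ℕ => grProb n (p n) fun G =>
        ∀ u v : Fin n, u ≠ v → (G.degree u : ℝ) ≤ Real.log n / 6 →
          (G.degree v : ℝ) ≤ Real.log n / 6 →
          ¬ G.Adj u v ∧ ∀ w, ¬ (G.Adj u w ∧ G.Adj v w))
      Filter.atTop (nhds 1) :=
  aas_small_vertices_apart_general p hp0 hp1 hlow
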